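/- arXiv:2104.06493 — 2 statements merged into one kernel-verified Lean document; each statement's English description precedes it below -/
import Mathlib

section
/- Let ν₁ ≥ ν₂ ≥ ... ≥ ν_n > 0 be integers and Z = ⊕_{i=1}^n ℂ[ζ]/(ζ^{ν_i}). Identify Aut_{ℂ[ζ]}(Z/ζZ) with GL(n, ℂ). Then the image of the canonical group homomorphism Aut_{ℂ[ζ]}(Z) → GL(n, ℂ) is exactly the subgroup P' = { a = (a_{ij}) ∈ GL(n, ℂ) : a_{ij} = 0 whenever ν_i > ν_j }, and the map sending a ∈ P' to the endomorphism g of Z with components g_{ij}(1) = a_{ij} is a group-theoretic section of this homomorphism. -/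
open Polynomial

/-- `Zmod n ν = ⊕_{i} ℂ[ζ]/(ζ^{ν i})`, realized as a product (the index set is finite). -/
noncomputable abbrev Zmod (n : ℕ) (ν : Fin n → ℕ) : Type :=
  ∀ i : Fin n, ℂ[X] ⧸ Ideal.span {(X : ℂ[X]) ^ ν i}

noncomputable section
variable {n : ℕ} (ν : Fin n → ℕ)

abbrev I6 (i : Fin n) : Ideal ℂ[X] := Ideal.span {(X : ℂ[X]) ^ ν i}

theorem quot_smul (i : Fin n) (r p : ℂ[X]) :
    r • (Ideal.Quotient.mk (I6 ν i) p) = Ideal.Quotient.mk (I6 ν i) (r * p) := by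
  rw [← Ideal.Quotient.mk_eq_mk, ← Ideal.Quotient.mk_eq_mk, ← Submodule.Quotient.mk_smul,
    smul_eq_mul]

def fmap (a : Matrix (Fin n) (Fin n) ℂ) (i j : Fin n) :
    (ℂ[X] ⧸ I6 ν j) →ₗ[ℂ[X]] (ℂ[X] ⧸ I6 ν i) :=
  if h : ν i ≤ ν j then
    Submodule.liftQ _ (C (a i j) • (I6 ν i).mkQ)
      (fun x hx => by
        have hle : I6 ν j ≤ I6 ν i :=
          Ideal.span_singleton_le_span_singleton.mpr (pow_dvd_pow X h)
        have : (Ideal.Quotient.mk (I6 ν i)) x = 0 :=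
          Ideal.Quotient.eq_zero_iff_mem.mpr (hle hx)
        simp [this])
  else 0

theorem fmap_mk (a : Matrix (Fin n) (Fin n) ℂ)
    (hP : ∀ i j, ν j < ν i → a i j = 0) (i j : Fin n) (p : ℂ[X]) :
    fmap ν a i j (Ideal.Quotient.mk _ p) = Ideal.Quotient.mk _ (C (a i j) * p) := by
  by_cases h : ν i ≤ ν j
  · rw [fmap, dif_pos h, ← Ideal.Quotient.mk_eq_mk, Submodule.liftQ_apply]
    simp [Ideal.Quotient.mk_eq_mk, quot_smul]
  · rw [fmap, dif_neg h, hP i j (not_le.mp h)]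
    simp

def Gmap (a : Matrix (Fin n) (Fin n) ℂ) : Zmod n ν →ₗ[ℂ[X]] Zmod n ν :=
  LinearMap.pi (fun i => ∑ j, (fmap ν a i j).comp (LinearMap.proj j))

theorem exists_rep (z : Zmod n ν) :
    ∃ p : Fin n → ℂ[X], z = fun j => Ideal.Quotient.mk (I6 ν j) (p j) := by
  choose p hp using fun j => Ideal.Quotient.mk_surjective (z j)
  exact ⟨p, funext fun j => (hp j).symm⟩

theorem Gmap_mk (a : Matrix (Fin n) (Fin n) ℂ)
    (hP : ∀ i j, ν j < ν i → a i j = 0) (p : Fin n → ℂ[X]) :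
    Gmap ν a (fun j => Ideal.Quotient.mk (I6 ν j) (p j)) =
      fun i => Ideal.Quotient.mk (I6 ν i) (∑ j, C (a i j) * p j) := by
  funext i
  simp [Gmap, fmap_mk ν a hP, map_sum]

theorem P_mul {a b : Matrix (Fin n) (Fin n) ℂ}
    (ha : ∀ i j, ν j < ν i → a i j = 0) (hb : ∀ i j, ν j < ν i → b i j = 0) :
    ∀ i j, ν j < ν i → (a * b) i j = 0 := by
  intro i j hij
  rw [Matrix.mul_apply]
  refine Finset.sum_eq_zero fun k _ => ?_
  by_cases h : ν k < ν i
  · rw [ha i k h, zero_mul]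
  · rw [hb k j (lt_of_lt_of_le hij (not_lt.mp h)), mul_zero]

theorem Gmap_comp {a b : Matrix (Fin n) (Fin n) ℂ}
    (ha : ∀ i j, ν j < ν i → a i j = 0) (hb : ∀ i j, ν j < ν i → b i j = 0) :
    (Gmap ν a).comp (Gmap ν b) = Gmap ν (a * b) := by
  apply LinearMap.ext
  intro z
  obtain ⟨p, rfl⟩ := exists_rep ν z
  rw [LinearMap.comp_apply, Gmap_mk ν b hb, Gmap_mk ν a ha, Gmap_mk ν _ (P_mul ν ha hb)]
  funext i
  congr 1
  simp only [Finset.mul_sum, Matrix.mul_apply, map_sum, Finset.sum_mul]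
  rw [Finset.sum_comm]
  refine Finset.sum_congr rfl fun k _ => Finset.sum_congr rfl fun j _ => ?_
  rw [map_mul]; ring

theorem Gmap_one : Gmap ν (1 : Matrix (Fin n) (Fin n) ℂ) = LinearMap.id := by
  apply LinearMap.ext
  intro z
  obtain ⟨p, rfl⟩ := exists_rep ν z
  rw [Gmap_mk ν 1 (fun i j h => Matrix.one_apply_ne (fun e => absurd (e ▸ h) (lt_irrefl _)))]
  funext i
  simp [Matrix.one_apply, apply_ite C, ite_mul, Finset.sum_ite_eq]

theorem Gmap_single (a : Matrix (Fin n) (Fin n) ℂ)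
    (hP : ∀ i j, ν j < ν i → a i j = 0) (j : Fin n) :
    Gmap ν a (Pi.single j (Ideal.Quotient.mk (I6 ν j) 1)) =
      fun i => Ideal.Quotient.mk (I6 ν i) (C (a i j)) := by
  have h : Pi.single j (Ideal.Quotient.mk (I6 ν j) 1) =
      fun k => Ideal.Quotient.mk (I6 ν k) (if k = j then 1 else 0) := by
    funext k
    by_cases h : k = j
    · subst h; simp
    · simp [Pi.single_eq_of_ne h, h]
  rw [h, Gmap_mk ν a hP]
  funext i
  simp [apply_ite C, mul_ite, Finset.sum_ite_eq']

theorem pi_eq_sum_single (p : Fin n → ℂ[X]) :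
    (fun j => Ideal.Quotient.mk (I6 ν j) (p j)) =
      ∑ k, p k • (Pi.single k (Ideal.Quotient.mk (I6 ν k) 1) : Zmod n ν) := by
  have h1 : ∀ k, p k • (Pi.single k (Ideal.Quotient.mk (I6 ν k) 1) : Zmod n ν) =
      Pi.single k (Ideal.Quotient.mk (I6 ν k) (p k)) := by
    intro k
    rw [← Pi.single_smul, quot_smul, mul_one]
  simp only [h1]
  exact (Finset.univ_sum_single _).symm

theorem ext_single {f g : Zmod n ν →ₗ[ℂ[X]] Zmod n ν}
    (h : ∀ j, f (Pi.single j (Ideal.Quotient.mk (I6 ν j) 1)) =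
      g (Pi.single j (Ideal.Quotient.mk (I6 ν j) 1))) : f = g := by
  apply LinearMap.ext
  intro z
  obtain ⟨p, rfl⟩ := exists_rep ν z
  rw [pi_eq_sum_single, map_sum, map_sum]
  exact Finset.sum_congr rfl fun k _ => by rw [map_smul, map_smul, h k]

end


/-- Let `ν₁ ≥ ... ≥ ν_n > 0`, `Z = ⊕ ℂ[ζ]/(ζ^{ν i})`, and let
`φ : Z → ℂⁿ` be the canonical reduction map onto `Z/ζZ ≅ ℂⁿ` (taking constant coefficients).
Then:
(1) the image of the canonical homomorphism `Aut_{ℂ[ζ]}(Z) → GL(n, ℂ)` (a matrix `a` is in the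
image iff some `ℂ[ζ]`-linear automorphism `g` satisfies `φ ∘ g = a · φ`) is exactly the
parabolic subgroup `P' = {a invertible | a i j = 0 whenever ν i > ν j}`;
(2) every `a ∈ P'` lifts to the automorphism `g` with components `g_{ij}(1) = a_{ij}`
(i.e. `g` sends the `j`-th generator to the constants `(a i j)_i`), inducing `a`),
(3) the assignment `a ↦ g` (characterized by its values on the generators) is multiplicative,
i.e. it is a group-theoretic section. -/
theorem stmt6 (n : ℕ) (hn : 0 < n) (ν : Fin n → ℕ) (hν : ∀ i, 0 < ν i)
    (hanti : ∀ i j : Fin n, i ≤ j → ν j ≤ ν i)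
    (φ : Zmod n ν →ₗ[ℂ] (Fin n → ℂ))
    (hφ : ∀ (p : Fin n → ℂ[X]) (i : Fin n),
      φ (fun j => Ideal.Quotient.mk (Ideal.span {(X : ℂ[X]) ^ ν j}) (p j)) i = (p i).eval 0) :
    ({a : Matrix (Fin n) (Fin n) ℂ |
        ∃ g : Zmod n ν ≃ₗ[ℂ[X]] Zmod n ν, ∀ z, φ (g z) = a.mulVec (φ z)} =
      {a : Matrix (Fin n) (Fin n) ℂ | IsUnit a ∧ ∀ i j, ν j < ν i → a i j = 0}) ∧
    (∀ a : Matrix (Fin n) (Fin n) ℂ, IsUnit a → (∀ i j, ν j < ν i → a i j = 0) →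
      ∃ g : Zmod n ν ≃ₗ[ℂ[X]] Zmod n ν,
        (∀ z, φ (g z) = a.mulVec (φ z)) ∧
        ∀ j, g (Pi.single j (Ideal.Quotient.mk (Ideal.span {(X : ℂ[X]) ^ ν j}) 1)) =
          fun i => Ideal.Quotient.mk (Ideal.span {(X : ℂ[X]) ^ ν i}) (C (a i j))) ∧
    (∀ (a b : Matrix (Fin n) (Fin n) ℂ) (ga gb gab : Zmod n ν ≃ₗ[ℂ[X]] Zmod n ν),
      (∀ j, ga (Pi.single j (Ideal.Quotient.mk (Ideal.span {(X : ℂ[X]) ^ ν j}) 1)) =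
          fun i => Ideal.Quotient.mk (Ideal.span {(X : ℂ[X]) ^ ν i}) (C (a i j))) →
      (∀ j, gb (Pi.single j (Ideal.Quotient.mk (Ideal.span {(X : ℂ[X]) ^ ν j}) 1)) =
          fun i => Ideal.Quotient.mk (Ideal.span {(X : ℂ[X]) ^ ν i}) (C (b i j))) →
      (∀ j, gab (Pi.single j (Ideal.Quotient.mk (Ideal.span {(X : ℂ[X]) ^ ν j}) 1)) =
          fun i => Ideal.Quotient.mk (Ideal.span {(X : ℂ[X]) ^ ν i}) (C ((a * b) i j))) →
      gab = gb.trans ga) := by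
  have part2 : ∀ a : Matrix (Fin n) (Fin n) ℂ, IsUnit a → (∀ i j, ν j < ν i → a i j = 0) →
      ∃ g : Zmod n ν ≃ₗ[ℂ[X]] Zmod n ν,
        (∀ z, φ (g z) = a.mulVec (φ z)) ∧
        ∀ j, g (Pi.single j (Ideal.Quotient.mk (Ideal.span {(X : ℂ[X]) ^ ν j}) 1)) =
          fun i => Ideal.Quotient.mk (Ideal.span {(X : ℂ[X]) ^ ν i}) (C (a i j)) := by
    intro a ha hP
    have hdet : IsUnit a.det := (Matrix.isUnit_iff_isUnit_det a).mp ha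
    haveI : Invertible a := a.invertibleOfIsUnitDet hdet
    have hBT : a.BlockTriangular ν := fun i j h => hP i j h
    have hPinv : ∀ i j, ν j < ν i → a⁻¹ i j = 0 :=
      fun i j h => Matrix.blockTriangular_inv_of_blockTriangular hBT h
    refine ⟨LinearEquiv.ofLinear (Gmap ν a) (Gmap ν a⁻¹) ?_ ?_, ?_, ?_⟩
    · rw [Gmap_comp ν hP hPinv, Matrix.mul_nonsing_inv a hdet, Gmap_one]
    · rw [Gmap_comp ν hPinv hP, Matrix.nonsing_inv_mul a hdet, Gmap_one]
    · intro z
      obtain ⟨p, rfl⟩ := exists_rep ν z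
      simp only [LinearEquiv.ofLinear_apply]
      rw [Gmap_mk ν a hP]
      funext i
      rw [hφ]
      simp [Matrix.mulVec, dotProduct, I6, hφ, eval_finset_sum]
    · intro j
      simp only [LinearEquiv.ofLinear_apply]
      exact Gmap_single ν a hP j
  refine ⟨?_, part2, ?_⟩
  · ext a
    simp only [Set.mem_setOf_eq]
    constructor
    · rintro ⟨g, hg⟩
      constructor
      · rw [← Matrix.mulVec_surjective_iff_isUnit]
        intro c
        refine ⟨φ (g.symm fun j => Ideal.Quotient.mk _ (C (c j))), ?_⟩
        rw [← hg, LinearEquiv.apply_symm_apply]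
        funext i
        rw [hφ]
        simp
      · intro i j hij
        have hsingle : (Pi.single j (Ideal.Quotient.mk (I6 ν j) 1) : Zmod n ν) =
            fun k => Ideal.Quotient.mk (I6 ν k) (if k = j then 1 else 0) := by
          funext k
          by_cases h : k = j
          · subst h; simp
          · simp [Pi.single_eq_of_ne h, h]
        obtain ⟨q, hq⟩ := exists_rep ν (g (Pi.single j (Ideal.Quotient.mk (I6 ν j) 1)))
        have haij : a i j = (q i).eval 0 := by
          have hphis : φ (fun k => Ideal.Quotient.mk (I6 ν k) (if k = j then 1 else 0)) =
              fun k => if k = j then (1:ℂ) else 0 := by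
            funext k
            rw [hφ]
            by_cases h : k = j <;> simp [h]
          have h1 := hg (Pi.single j (Ideal.Quotient.mk (I6 ν j) 1))
          rw [hq, hsingle, hphis] at h1
          have h2 := congrFun h1 i
          rw [hφ] at h2
          simp [Matrix.mulVec, dotProduct, mul_ite, Finset.sum_ite_eq'] at h2
          exact h2.symm
        have hz : (X : ℂ[X]) ^ (ν j) • (Pi.single j (Ideal.Quotient.mk (I6 ν j) 1) : Zmod n ν)
            = 0 := by
          funext k
          rw [Pi.smul_apply]
          by_cases h : k = j
          · subst h
            rw [Pi.single_eq_same, quot_smul, mul_one]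
            exact Ideal.Quotient.eq_zero_iff_mem.mpr (Ideal.subset_span rfl)
          · rw [Pi.single_eq_of_ne h, smul_zero]
            rfl
        have hz2 : (X : ℂ[X]) ^ (ν j) • g (Pi.single j (Ideal.Quotient.mk (I6 ν j) 1)) = 0 := by
          rw [← map_smul, hz, map_zero]
        rw [hq] at hz2
        have h3 := congrFun hz2 i
        rw [Pi.smul_apply, quot_smul] at h3
        have hdvd : (X : ℂ[X]) ^ (ν i) ∣ (X : ℂ[X]) ^ (ν j) * q i :=
          Ideal.mem_span_singleton.mp (Ideal.Quotient.eq_zero_iff_mem.mp h3)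
        have hXdvd : (X : ℂ[X]) ∣ q i := by
          have h4 : (X : ℂ[X]) ^ (ν j + 1) ∣ (X : ℂ[X]) ^ (ν j) * q i :=
            dvd_trans (pow_dvd_pow X hij) hdvd
          rw [pow_succ] at h4
          exact (mul_dvd_mul_iff_left (pow_ne_zero _ Polynomial.X_ne_zero)).mp h4
        rw [haij, ← Polynomial.coeff_zero_eq_eval_zero]
        exact Polynomial.X_dvd_iff.mp hXdvd
    · rintro ⟨ha, hP⟩
      obtain ⟨g, h1, _⟩ := part2 a ha hP
      exact ⟨g, h1⟩
  · intro a b ga gb gab hga hgb hgab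
    apply LinearEquiv.toLinearMap_injective
    apply ext_single ν
    intro j
    simp only [LinearEquiv.coe_coe, LinearEquiv.trans_apply]
    rw [hgab j, hgb j]
    have hrep : (fun i => Ideal.Quotient.mk (I6 ν i) (C (b i j))) =
        ∑ k, (C (b k j) : ℂ[X]) • (Pi.single k (Ideal.Quotient.mk (I6 ν k) 1) : Zmod n ν) :=
      pi_eq_sum_single ν (fun i => C (b i j))
    rw [hrep, map_sum]
    simp only [map_smul, hga]
    funext i
    rw [Finset.sum_apply]
    simp only [Pi.smul_apply, quot_smul]
    rw [← map_sum]
    congr 1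
    rw [Matrix.mul_apply, map_sum]
    refine Finset.sum_congr rfl fun k _ => ?_
    rw [← C_mul, mul_comm]
end

section
/- Let μ and v be positive integers. For a partition N of μ with distinct part values of multiplicities k₁, k₂−k₁, ..., k_l−k_{l−1} (and k_l total parts), set Ξ(v, N) = v!/((k₁)!(k₂−k₁)!⋯(k_l−k_{l−1})!(v−k_l)!) (which is 0 if k_l > v). Then Σ_{N ∈ 𝒫(μ)} Ξ(v, N) = C(v + μ − 1, μ), where 𝒫(μ) is the set of partitions of μ. -/
/-!
Both sides count the multisets of size `μ` over `Fin v`. The left side sorts them by the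
partition `N` formed by their nonzero multiplicities: through its multiplicity function, a
multiset of shape `N` is a map `Fin v → ℕ` whose multiset of values is `N` padded with
`v - k` zeros (`k` the number of parts). Such maps form one orbit of `Perm (Fin v)` acting by
precomposition, and the stabilizer of one of them permutes each fibre independently, so
orbit–stabilizer gives `v! / ((∏ multiplicities!) (v - k)!)` of them.
-/

open Finset Nat Equiv MulAction

section ValueMultiset

variable {α ι : Type*} [Fintype α]

theorem Multiset.exists_map_univ_val_eq (M : Multiset ι)
    (hM : Multiset.card M = Fintype.card α) :
    ∃ f : α → ι, univ.val.map f = M := by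
  let e : α ≃ Fin M.toList.length := Fintype.equivFinOfCardEq (by simp [hM])
  refine ⟨M.toList.get ∘ e, ?_⟩
  rw [← Multiset.map_map, Multiset.map_univ_val_equiv, Fin.univ_val_map, List.ofFn_get,
    Multiset.coe_toList]

variable [DecidableEq ι]

theorem Fintype.card_fiber_eq_count_map_univ (f : α → ι) (i : ι) :
    Fintype.card {a // f a = i} = (univ.val.map f).count i := by
  rw [Fintype.card_subtype, Multiset.count_map, Finset.card_def, Finset.filter_val]
  simp only [eq_comm]

theorem exists_perm_comp_eq_of_map_univ_val_eq {f g : α → ι}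
    (h : univ.val.map f = univ.val.map g) : ∃ σ : Perm α, g ∘ σ = f := by
  have e : ∀ i, {a // f a = i} ≃ {a // g a = i} := fun i =>
    Fintype.equivOfCardEq (by simp only [Fintype.card_fiber_eq_count_map_univ, h])
  exact ⟨ofFiberEquiv e, funext (ofFiberEquiv_map e)⟩

theorem DomMulAct.orbit_perm_eq (f : α → ι) :
    orbit (Perm α)ᵈᵐᵃ f = {g | univ.val.map g = univ.val.map f} := by
  ext g
  constructor
  · rintro ⟨σ, rfl⟩
    obtain ⟨τ, rfl⟩ := DomMulAct.mk.surjective σ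
    show univ.val.map (f ∘ τ) = _
    rw [← Multiset.map_map, Multiset.map_univ_val_equiv]
  · intro h
    obtain ⟨σ, hσ⟩ := exists_perm_comp_eq_of_map_univ_val_eq h
    exact ⟨DomMulAct.mk σ, hσ⟩

variable [DecidableEq α]

theorem DomMulAct.card_stabilizer_perm (f : α → ι) :
    Nat.card (stabilizer (Perm α)ᵈᵐᵃ f) =
      ∏ c ∈ (univ.val.map f).toFinset, ((univ.val.map f).count c)! := by
  rw [Nat.card_congr (DomMulAct.mk.symm.subtypeEquiv (p := (· ∈ stabilizer (Perm α)ᵈᵐᵃ f))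
      (q := fun g : Perm α => f ∘ g = f) fun _ => DomMulAct.mem_stabilizer_iff),
    Nat.card_eq_fintype_card, stabilizer_card']
  simp only [Fintype.card_fiber_eq_count_map_univ]
  rfl

theorem Nat.card_map_univ_val_eq_mul_prod_factorial (M : Multiset ι)
    (hM : Multiset.card M = Fintype.card α) :
    Nat.card {g : α → ι // univ.val.map g = M} * ∏ c ∈ M.toFinset, (M.count c)! =
      (Fintype.card α)! := by
  obtain ⟨f, rfl⟩ := M.exists_map_univ_val_eq hM
  calc _ = Nat.card (stabilizer (Perm α)ᵈᵐᵃ f) * (orbit (Perm α)ᵈᵐᵃ f).ncard := by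
        rw [DomMulAct.card_stabilizer_perm, DomMulAct.orbit_perm_eq, ← Nat.card_coe_set_eq,
          mul_comm]
        rfl
    _ = Nat.card (Perm α) := by
        rw [← index_stabilizer, Subgroup.card_mul_index, Nat.card_congr DomMulAct.mk.symm]
    _ = _ := by rw [Nat.card_perm, Nat.card_eq_fintype_card]

end ValueMultiset

namespace Multiset

theorem filter_ne_zero_add_replicate (m : Multiset ℕ) :
    m.filter (· ≠ 0) + replicate (card m - card (m.filter (· ≠ 0))) 0 = m := by
  conv_rhs => rw [← m.filter_add_not (· ≠ 0)]
  congr 1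
  rw [eq_comm, eq_replicate]
  refine ⟨?_, fun x hx => not_not.mp (mem_filter.mp hx).2⟩
  have := congrArg card (m.filter_add_not (· ≠ 0))
  rw [card_add] at this
  omega

theorem prod_factorial_count_add_replicate {ι : Type*} [DecidableEq ι]
    {P : Multiset ι} {a : ι} (ha : a ∉ P) (r : ℕ) :
    ∏ c ∈ (P + replicate r a).toFinset, ((P + replicate r a).count c)! =
      (∏ c ∈ P.toFinset, (P.count c)!) * r ! := by
  have hsub : (P + replicate r a).toFinset ⊆ insert a P.toFinset := fun c hc => by
    rcases mem_add.mp (mem_toFinset.mp hc) with hc | hc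
    · exact mem_insert_of_mem (mem_toFinset.mpr hc)
    · exact eq_of_mem_replicate hc ▸ mem_insert_self _ _
  rw [Finset.prod_subset hsub fun c _ hc => by
      rw [count_eq_zero.mpr fun h => hc (mem_toFinset.mpr h), factorial_zero],
    prod_insert (by simpa using ha), mul_comm]
  congr 1
  · exact prod_congr rfl fun c hc => by
      rw [count_add, count_replicate, if_neg (by rintro rfl; exact ha (by simpa using hc)),
        add_zero]
  · rw [count_add, count_replicate_self, count_eq_zero.mpr ha, zero_add]

end Multiset

namespace Nat.Partition

variable {α : Type*} [Fintype α] [DecidableEq α] {n : ℕ}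

theorem ofSym_parts_eq_filter (s : Sym α n) :
    (ofSym s).parts = (univ.val.map fun a => (s : Multiset α).count a).filter (· ≠ 0) := by
  rw [Multiset.filter_map]
  refine congrArg (Multiset.map _) ((Multiset.Nodup.ext (Multiset.nodup_dedup _)
    (univ.nodup.filter _)).mpr fun a => ?_)
  simp [Multiset.count_eq_zero]

theorem ofSym_eq_iff (s : Sym α n) (N : n.Partition) :
    ofSym s = N ↔ univ.val.map (fun a => (s : Multiset α).count a) =
      N.parts + Multiset.replicate (Fintype.card α - Multiset.card N.parts) 0 := by
  constructor
  · rintro rfl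
    have h := Multiset.filter_ne_zero_add_replicate
      (univ.val.map fun a => (s : Multiset α).count a)
    rwa [Multiset.card_map, card_val, Finset.card_univ, eq_comm, ← ofSym_parts_eq_filter] at h
  · intro h
    ext1
    rw [ofSym_parts_eq_filter, h, Multiset.filter_add,
      Multiset.filter_eq_self.mpr fun x hx => (N.parts_pos hx).ne',
      Multiset.filter_eq_nil.mpr fun x hx => by simp [Multiset.eq_of_mem_replicate hx], add_zero]

noncomputable def ofSymFiberEquiv (N : n.Partition) :
    {s : Sym α n // ofSym s = N} ≃ {P : α → ℕ // univ.val.map P =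
      N.parts + Multiset.replicate (Fintype.card α - Multiset.card N.parts) 0} :=
  ((Sym.equivNatSumOfFintype α n).subtypeEquiv fun s => ofSym_eq_iff s N).trans <|
    Equiv.subtypeSubtypeEquivSubtype fun {P} hP => by
      rw [Finset.sum_eq_multiset_sum, hP, Multiset.sum_add, Multiset.sum_replicate, smul_zero,
        add_zero, N.parts_sum]

theorem card_ofSym_fiber (N : n.Partition) :
    Nat.card {s : Sym α n // ofSym s = N} =
      if Multiset.card N.parts ≤ Fintype.card α then
        (Fintype.card α)! / ((∏ c ∈ N.parts.toFinset, (N.parts.count c)!) *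
          (Fintype.card α - Multiset.card N.parts)!)
      else 0 := by
  rw [Nat.card_congr (ofSymFiberEquiv N)]
  split_ifs with hN
  · have h := Nat.card_map_univ_val_eq_mul_prod_factorial (α := α)
      (N.parts + Multiset.replicate (Fintype.card α - Multiset.card N.parts) 0)
      (by rw [Multiset.card_add, Multiset.card_replicate]; omega)
    rw [Multiset.prod_factorial_count_add_replicate fun h0 => (N.parts_pos h0).ne' rfl] at h
    rw [← h, Nat.mul_div_cancel _ (by positivity)]
  · refine Nat.card_eq_zero.mpr (Or.inl ⟨fun ⟨P, hP⟩ => hN ?_⟩)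
    have h := congrArg Multiset.card hP
    rw [Multiset.card_map, card_val, Finset.card_univ, Multiset.card_add,
      Multiset.card_replicate] at h
    omega

end Nat.Partition

theorem stmt9_general (μ v : ℕ) :
    (∑ N : Nat.Partition μ,
      if Multiset.card N.parts ≤ v then
        Nat.factorial v /
          ((∏ c ∈ N.parts.toFinset, Nat.factorial (N.parts.count c)) *
            Nat.factorial (v - Multiset.card N.parts))
      else 0) = Nat.choose (v + μ - 1) μ := by
  calc _ = ∑ N : μ.Partition, Nat.card {s : Sym (Fin v) μ // Nat.Partition.ofSym s = N} := by
        simp only [Nat.Partition.card_ofSym_fiber, Fintype.card_fin]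
    _ = Nat.card (Sym (Fin v) μ) := by
        rw [← Nat.card_sigma, Nat.card_congr
          (Equiv.sigmaFiberEquiv fun s : Sym (Fin v) μ => Nat.Partition.ofSym s)]
    _ = _ := by rw [Nat.card_eq_fintype_card, Sym.card_sym_eq_choose, Fintype.card_fin]

/-- For a partition `N` of `μ`, `Ξ(v, N) = v!/((∏ distinct values c of N) (mult of c)!) ⋅
1/(v - #parts)!` — the multinomial coefficient, which is `0` if `N` has more than `v` parts.
Summing over all partitions of `μ`: `Σ_{N ∈ 𝒫(μ)} Ξ(v, N) = C(v + μ - 1, μ)`. -/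
theorem stmt9 (μ v : ℕ) (hμ : 0 < μ) (hv : 0 < v) :
    (∑ N : Nat.Partition μ,
      if Multiset.card N.parts ≤ v then
        Nat.factorial v /
          ((∏ c ∈ N.parts.toFinset, Nat.factorial (N.parts.count c)) *
            Nat.factorial (v - Multiset.card N.parts))
      else 0) = Nat.choose (v + μ - 1) μ :=
  stmt9_general μ v
end
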